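/- Let UpperToepl_n ⊆ M_n(ℂ) be the (unital, abelian) algebra of all upper triangular Toeplitz matrices. If ϱ : UpperToepl_n → M_n(ℂ) is a unital algebra homomorphism such that ‖ϱ(X)‖ = ‖X‖ for every X ∈ UpperToepl_n, then there exists a unitary U ∈ M_n(ℂ) such that ϱ(X) = U*XU for every X ∈ UpperToepl_n. -/

import Mathlib

/-!
Let `N` be the upper shift, so that the upper triangular Toeplitz matrices are the polynomials in
`N` of degree `< n`, and let `T` be the operator of `M = ϱ N`. Isometry of `ϱ` on the powers of `N`
gives `‖T‖ ≤ 1` and `‖T ^ (n - 1)‖ = 1`, while `T ^ n = 0`. If `x` is a unit vector with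
`‖T ^ (n - 1) x‖ = 1`, then all `T ^ k x` (`k < n`) are unit vectors. A contraction that preserves
the norm of `u` preserves all inner products `⟪u, w⟫`, so pushing `T ^ j x` and `T ^ k x`
(`j < k`) forward by `T ^ (n - k)`, which sends the latter to `T ^ n x = 0`, shows that they are
orthogonal. In the orthonormal basis `T ^ (n - 1) x, …, T x, x` the matrix `M` is exactly `N`, and
the change of basis is the unitary.
-/

open Polynomial Matrix

/-- The operator norm of a complex matrix, i.e. its norm as a linear map on the
Euclidean space `ℂⁿ`; it equals `√(spr(A*A))`, the largest singular value. -/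
noncomputable def opNorm {n : ℕ} (A : Matrix (Fin n) (Fin n) ℂ) : ℝ :=
  ‖Matrix.toEuclideanCLM (𝕜 := ℂ) A‖

/-- `R` is an upper triangular Toeplitz matrix: `R i j = z (j - i)` for `i ≤ j`
and `R i j = 0` for `j < i`. -/
def IsUpperToeplitz {n : ℕ} (R : Matrix (Fin n) (Fin n) ℂ) : Prop :=
  ∃ z : ℕ → ℂ, ∀ i j : Fin n,
    R i j = if (i : ℕ) ≤ (j : ℕ) then z ((j : ℕ) - (i : ℕ)) else 0

open scoped InnerProduct

namespace Matrix

variable {R : Type*} {n : ℕ}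

def shiftMatrix (R : Type*) [Zero R] [One R] (n : ℕ) : Matrix (Fin n) (Fin n) R :=
  of fun i j => if (j : ℕ) = i + 1 then 1 else 0

theorem shiftMatrix_pow_apply [Semiring R] (k : ℕ) (i j : Fin n) :
    (shiftMatrix R n ^ k) i j = if (j : ℕ) = i + k then 1 else 0 := by
  induction k generalizing j with
  | zero => simp [one_apply, Fin.ext_iff, eq_comm]
  | succ k ih =>
    rw [pow_succ, mul_apply]
    by_cases h : (i : ℕ) + k < n
    · rw [Fintype.sum_eq_single ⟨i + k, h⟩ fun l hl => ?_]
      · rw [ih, shiftMatrix, of_apply]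
        simp [add_assoc]
      · simp [ih, Fin.ext_iff.not.1 hl]
    · refine (Finset.sum_eq_zero fun l _ => ?_).trans (if_neg (by omega)).symm
      rw [ih, shiftMatrix, of_apply]
      split_ifs <;> first | omega | simp

theorem shiftMatrix_pow_self [Semiring R] : shiftMatrix R n ^ n = 0 := by
  ext i j
  simp only [shiftMatrix_pow_apply, zero_apply, ite_eq_right_iff]
  omega

theorem sum_smul_shiftMatrix_pow_apply [Semiring R] (z : ℕ → R) (s : Finset ℕ) (i j : Fin n) :
    (∑ k ∈ s, z k • shiftMatrix R n ^ k) i j =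
      if (i : ℕ) ≤ j ∧ (j : ℕ) - i ∈ s then z (j - i) else 0 := by
  have (k : ℕ) : (j : ℕ) = i + k ↔ (i : ℕ) ≤ j ∧ k = j - i := by omega
  simp only [Matrix.sum_apply, Matrix.smul_apply, shiftMatrix_pow_apply, this, smul_eq_mul, mul_ite,
    mul_one, mul_zero, ite_and, Finset.sum_ite_irrel, Finset.sum_ite_eq', Finset.sum_const_zero]

theorem mul_shiftMatrix_apply [Semiring R] (A : Matrix (Fin n) (Fin n) R) (i j : Fin n) :
    (A * shiftMatrix R n) i j = if h : 0 < (j : ℕ) then A i ⟨j - 1, by omega⟩ else 0 := by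
  split_ifs with h
  · rw [mul_apply, Fintype.sum_eq_single ⟨j - 1, by omega⟩ fun l hl => ?_]
    · simp only [shiftMatrix, of_apply, mul_ite, mul_one, mul_zero, ite_eq_left_iff]
      omega
    · simp only [ne_eq, Fin.ext_iff, shiftMatrix, of_apply, mul_ite, mul_one, mul_zero,
        ite_eq_right_iff] at hl ⊢
      omega
  · simp only [shiftMatrix, mul_apply, of_apply, mul_ite, mul_one, mul_zero]
    exact Finset.sum_eq_zero fun l _ => if_neg (by omega)

theorem shiftMatrix_mulVec_apply [Semiring R] (v : Fin n → R) (i : Fin n) :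
    (shiftMatrix R n *ᵥ v) i = if (i : ℕ) + 1 < n then v (finRotate n i) else 0 := by
  rw [mulVec, dotProduct]
  split_ifs with h
  · rw [Fintype.sum_eq_single (finRotate n i) fun j hj => ?_]
    · simp [shiftMatrix, finRotate_apply, Fin.val_add_one_of_lt' h]
    · simp [shiftMatrix, finRotate_apply, Fin.ext_iff, Fin.val_add_one_of_lt' h] at hj ⊢
      omega
  · exact Finset.sum_eq_zero fun j _ => by
      simp only [shiftMatrix, of_apply, ite_mul, one_mul, zero_mul, ite_eq_right_iff]
      omega

/-- Columns `M ^ (n - 1) x, …, M x, x`: the basis in which a nilpotent `M` with cyclic vector `x`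
becomes the shift. -/
def jordanChainMatrix [Semiring R] (M : Matrix (Fin n) (Fin n) R) (x : Fin n → R) :
    Matrix (Fin n) (Fin n) R :=
  of fun i j => (M ^ (Fin.rev j : ℕ) *ᵥ x) i

theorem semiconjBy_jordanChainMatrix [Semiring R] {M : Matrix (Fin n) (Fin n) R}
    {x : Fin n → R} (hx : M ^ n *ᵥ x = 0) :
    SemiconjBy (jordanChainMatrix M x) (shiftMatrix R n) M := by
  refine (Matrix.ext fun i j => ?_).symm
  have hcol : (M * jordanChainMatrix M x) i j = (M ^ (n - j) *ᵥ x) i := by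
    change (M *ᵥ (M ^ (Fin.rev j : ℕ) *ᵥ x)) i = _
    rw [mulVec_mulVec, ← pow_succ', Fin.val_rev]
    congr 3
    omega
  rw [hcol, mul_shiftMatrix_apply]
  split_ifs with h
  · simp only [jordanChainMatrix, Fin.val_rev, of_apply]
    congr 3
    omega
  · simp [show (j : ℕ) = 0 by omega, hx]

end Matrix

namespace ContinuousLinearMap

variable {𝕜 E F : Type*} [RCLike 𝕜]

section Normed

variable [NormedAddCommGroup E] [NormedSpace 𝕜 E] [NormedAddCommGroup F] [NormedSpace 𝕜 F]

theorem norm_pow_le_one {T : E →L[𝕜] E} (hT : ‖T‖ ≤ 1) (k : ℕ) : ‖T ^ k‖ ≤ 1 := by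
  rcases k.eq_zero_or_pos with rfl | hk
  · exact norm_id_le
  · exact (norm_pow_le' T hk).trans (pow_le_one₀ (norm_nonneg T) hT)

theorem exists_norm_eq_one_norm_apply_eq_opNorm [FiniteDimensional 𝕜 E] [Nontrivial E]
    (f : E →L[𝕜] F) : ∃ x, ‖x‖ = 1 ∧ ‖f x‖ = ‖f‖ := by
  have := FiniteDimensional.proper_rclike 𝕜 E
  obtain ⟨x, hx, hmax⟩ := (isCompact_sphere (0 : E) 1).exists_isMaxOn
    (Set.nonempty_coe_sort.1 (NormedSpace.sphere_nonempty_rclike 𝕜 zero_le_one))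
    (continuous_norm.comp f.continuous).continuousOn
  have hx : ‖x‖ = 1 := mem_sphere_zero_iff_norm.1 hx
  refine ⟨x, hx, le_antisymm (by simpa [hx] using f.le_opNorm x) ?_⟩
  exact opNorm_le_of_unit_norm (norm_nonneg _) fun y hy => hmax (mem_sphere_zero_iff_norm.2 hy)

end Normed

variable [NormedAddCommGroup E] [InnerProductSpace 𝕜 E] [CompleteSpace E]

theorem adjoint_comp_self_apply_of_norm_apply_eq {T : E →L[𝕜] E} (hT : ‖T‖ ≤ 1) {u : E}
    (hu : ‖T u‖ = ‖u‖) : (T† ∘L T) u = u := by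
  set S := T† ∘L T
  have hS : ‖S u‖ ≤ ‖u‖ := by
    refine (S.le_opNorm u).trans (mul_le_of_le_one_left (norm_nonneg u) ?_)
    rw [norm_adjoint_comp_self]
    exact mul_le_one₀ hT (norm_nonneg T) hT
  have hSu : inner 𝕜 (S u) u = (‖u‖ ^ 2 : 𝕜) := by
    rw [comp_apply, adjoint_inner_left, inner_self_eq_norm_sq_to_K, hu]
  -- `‖S u - u‖² = ‖S u‖² - 2 ‖T u‖² + ‖u‖² = ‖S u‖² - ‖u‖²`
  have : ‖S u - u‖ ^ 2 ≤ 0 := by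
    rw [@norm_sub_sq 𝕜, hSu]
    norm_cast
    nlinarith [norm_nonneg (S u), norm_nonneg u]
  exact sub_eq_zero.1 (norm_eq_zero.1 (by nlinarith [norm_nonneg (S u - u)]))

theorem inner_map_map_of_norm_apply_eq {T : E →L[𝕜] E} (hT : ‖T‖ ≤ 1) {u : E}
    (hu : ‖T u‖ = ‖u‖) (w : E) : inner 𝕜 (T u) (T w) = inner 𝕜 u w := by
  rw [← adjoint_inner_left, ← comp_apply, adjoint_comp_self_apply_of_norm_apply_eq hT hu]

theorem orthonormal_pow_apply {T : E →L[𝕜] E} (hT : ‖T‖ ≤ 1) {n : ℕ} {x : E} (hx : ‖x‖ = 1)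
    (hlast : ‖(T ^ (n - 1)) x‖ = 1) (hTn : (T ^ n) x = 0) :
    Orthonormal 𝕜 fun k : Fin n => (T ^ (k : ℕ)) x := by
  have pow_pow_apply (a b : ℕ) : (T ^ a) ((T ^ b) x) = (T ^ (a + b)) x := by
    rw [pow_add]; rfl
  have norm_pow_apply_le (a : ℕ) (y : E) : ‖(T ^ a) y‖ ≤ ‖y‖ :=
    ((T ^ a).le_opNorm y).trans (mul_le_of_le_one_left (norm_nonneg y) (norm_pow_le_one hT a))
  have norm_pow_apply (k : ℕ) (hk : k < n) : ‖(T ^ k) x‖ = 1 := by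
    refine le_antisymm (hx ▸ norm_pow_apply_le k x) ?_
    calc 1 = ‖(T ^ (n - 1 - k)) ((T ^ k) x)‖ := by
          rw [pow_pow_apply, Nat.sub_add_cancel (by omega), hlast]
      _ ≤ ‖(T ^ k) x‖ := norm_pow_apply_le _ _
  have inner_eq_zero_of_lt (j k : Fin n) (hjk : j < k) :
      inner 𝕜 ((T ^ (j : ℕ)) x) ((T ^ (k : ℕ)) x) = 0 := by
    have hj : ‖(T ^ (n - k)) ((T ^ (j : ℕ)) x)‖ = ‖(T ^ (j : ℕ)) x‖ := by
      rw [pow_pow_apply, norm_pow_apply _ (by omega), norm_pow_apply _ j.2]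
    rw [← inner_map_map_of_norm_apply_eq (norm_pow_le_one hT _) hj, pow_pow_apply, pow_pow_apply,
      Nat.sub_add_cancel k.2.le, hTn, inner_zero_right]
  refine ⟨fun k => norm_pow_apply k k.2, fun j k hjk => ?_⟩
  rcases hjk.lt_or_gt with h | h
  · exact inner_eq_zero_of_lt j k h
  · exact inner_eq_zero_symm.1 (inner_eq_zero_of_lt k j h)

end ContinuousLinearMap

namespace Matrix

variable {𝕜 : Type*} [RCLike 𝕜] {n : ℕ}

theorem norm_apply_le_norm_toEuclideanCLM {ι : Type*} [Fintype ι] [DecidableEq ι]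
    (A : Matrix ι ι 𝕜) (i j : ι) : ‖A i j‖ ≤ ‖toEuclideanCLM (𝕜 := 𝕜) A‖ := by
  have hcol : toEuclideanCLM (𝕜 := 𝕜) A (EuclideanSpace.single j 1) i = A i j := by
    simp [EuclideanSpace.single, mulVec_single]
  calc ‖A i j‖ ≤ ‖toEuclideanCLM (𝕜 := 𝕜) A (EuclideanSpace.single j 1)‖ :=
        hcol ▸ PiLp.norm_apply_le _ i
    _ ≤ ‖toEuclideanCLM (𝕜 := 𝕜) A‖ := by
        simpa using (toEuclideanCLM (𝕜 := 𝕜) A).le_opNorm (EuclideanSpace.single j 1)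

theorem norm_toEuclideanCLM_shiftMatrix_le :
    ‖toEuclideanCLM (𝕜 := 𝕜) (shiftMatrix 𝕜 n)‖ ≤ 1 := by
  refine ContinuousLinearMap.opNorm_le_bound _ zero_le_one fun v => ?_
  rw [one_mul, ← sq_le_sq₀ (norm_nonneg _) (norm_nonneg _), EuclideanSpace.norm_sq_eq,
    EuclideanSpace.norm_sq_eq v, ← Equiv.sum_comp (finRotate n) fun i => ‖v i‖ ^ 2]
  refine Finset.sum_le_sum fun i _ => ?_
  change ‖(shiftMatrix 𝕜 n *ᵥ v) i‖ ^ 2 ≤ _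
  rw [shiftMatrix_mulVec_apply]
  split_ifs <;> simp

theorem norm_toEuclideanCLM_shiftMatrix_pow {k : ℕ} (hk : k < n) :
    ‖toEuclideanCLM (𝕜 := 𝕜) (shiftMatrix 𝕜 n ^ k)‖ = 1 := by
  refine le_antisymm ?_ ?_
  · simpa only [map_pow] using ContinuousLinearMap.norm_pow_le_one
      (norm_toEuclideanCLM_shiftMatrix_le (𝕜 := 𝕜) (n := n)) k
  · simpa [shiftMatrix_pow_apply] using
      norm_apply_le_norm_toEuclideanCLM (shiftMatrix 𝕜 n ^ k) ⟨0, by omega⟩ ⟨k, hk⟩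

theorem mem_unitaryGroup_of_orthonormal_columns {ι : Type*} [Fintype ι] [DecidableEq ι]
    {v : ι → EuclideanSpace 𝕜 ι} (hv : Orthonormal 𝕜 v) :
    of (fun i j => v j i) ∈ unitaryGroup ι 𝕜 := by
  rw [mem_unitaryGroup_iff']
  ext j k
  simpa [mul_apply, PiLp.inner_apply, one_apply, mul_comm] using orthonormal_iff_ite.1 hv j k

end Matrix

section UpperToeplitz

variable {n : ℕ}

theorem isUpperToeplitz_sum_smul_shiftMatrix_pow (z : ℕ → ℂ) (s : Finset ℕ) :
    IsUpperToeplitz (∑ k ∈ s, z k • shiftMatrix ℂ n ^ k) :=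
  ⟨fun d => if d ∈ s then z d else 0, fun i j => by
    rw [sum_smul_shiftMatrix_pow_apply]
    split_ifs <;> simp_all⟩

theorem isUpperToeplitz_shiftMatrix_pow (k : ℕ) : IsUpperToeplitz (shiftMatrix ℂ n ^ k) := by
  simpa using isUpperToeplitz_sum_smul_shiftMatrix_pow (n := n) 1 {k}

theorem isUpperToeplitz_smul_shiftMatrix_pow (c : ℂ) (k : ℕ) :
    IsUpperToeplitz (c • shiftMatrix ℂ n ^ k) := by
  simpa using isUpperToeplitz_sum_smul_shiftMatrix_pow (n := n) (fun _ => c) {k}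

theorem IsUpperToeplitz.exists_eq_sum_smul_shiftMatrix_pow {X : Matrix (Fin n) (Fin n) ℂ}
    (hX : IsUpperToeplitz X) :
    ∃ z : ℕ → ℂ, X = ∑ k ∈ Finset.range n, z k • shiftMatrix ℂ n ^ k := by
  obtain ⟨z, hz⟩ := hX
  refine ⟨z, Matrix.ext fun i j => ?_⟩
  have hlt : (j : ℕ) - i < n := by omega
  simp [hz, sum_smul_shiftMatrix_pow_apply, hlt]

variable {ϱ : Matrix (Fin n) (Fin n) ℂ → Matrix (Fin n) (Fin n) ℂ}

theorem map_shiftMatrix_pow (hone : ϱ 1 = 1)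
    (hmul : ∀ X Y : Matrix (Fin n) (Fin n) ℂ, IsUpperToeplitz X → IsUpperToeplitz Y →
      ϱ (X * Y) = ϱ X * ϱ Y) (k : ℕ) :
    ϱ (shiftMatrix ℂ n ^ k) = ϱ (shiftMatrix ℂ n) ^ k := by
  induction k with
  | zero => simpa using hone
  | succ k ih =>
    rw [pow_succ, hmul _ _ (isUpperToeplitz_shiftMatrix_pow k)
      (by simpa using isUpperToeplitz_shiftMatrix_pow 1), ih, pow_succ]

theorem map_zero_of_map_smul
    (hsmul : ∀ (c : ℂ) (X : Matrix (Fin n) (Fin n) ℂ), IsUpperToeplitz X →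
      ϱ (c • X) = c • ϱ X) : ϱ 0 = 0 := by
  simpa using hsmul 0 1 (by simpa using isUpperToeplitz_shiftMatrix_pow (n := n) 0)

theorem map_sum_smul_shiftMatrix_pow
    (hadd : ∀ X Y : Matrix (Fin n) (Fin n) ℂ, IsUpperToeplitz X → IsUpperToeplitz Y →
      ϱ (X + Y) = ϱ X + ϱ Y)
    (hsmul : ∀ (c : ℂ) (X : Matrix (Fin n) (Fin n) ℂ), IsUpperToeplitz X →
      ϱ (c • X) = c • ϱ X) (z : ℕ → ℂ) (s : Finset ℕ) :
    ϱ (∑ k ∈ s, z k • shiftMatrix ℂ n ^ k) = ∑ k ∈ s, z k • ϱ (shiftMatrix ℂ n ^ k) := by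
  classical
  induction s using Finset.induction with
  | empty => simpa using map_zero_of_map_smul hsmul
  | insert k s hk ih =>
    rw [Finset.sum_insert hk, Finset.sum_insert hk, hadd _ _
      (isUpperToeplitz_smul_shiftMatrix_pow _ k) (isUpperToeplitz_sum_smul_shiftMatrix_pow z s),
      hsmul _ _ (isUpperToeplitz_shiftMatrix_pow k), ih]

theorem map_eq_mul_mul_of_map_shiftMatrix_pow
    (hadd : ∀ X Y : Matrix (Fin n) (Fin n) ℂ, IsUpperToeplitz X → IsUpperToeplitz Y →
      ϱ (X + Y) = ϱ X + ϱ Y)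
    (hsmul : ∀ (c : ℂ) (X : Matrix (Fin n) (Fin n) ℂ), IsUpperToeplitz X →
      ϱ (c • X) = c • ϱ X) {A B : Matrix (Fin n) (Fin n) ℂ}
    (hpow : ∀ k, ϱ (shiftMatrix ℂ n ^ k) = A * shiftMatrix ℂ n ^ k * B)
    {X : Matrix (Fin n) (Fin n) ℂ} (hX : IsUpperToeplitz X) : ϱ X = A * X * B := by
  obtain ⟨z, rfl⟩ := hX.exists_eq_sum_smul_shiftMatrix_pow
  rw [map_sum_smul_shiftMatrix_pow hadd hsmul, Finset.mul_sum, Finset.sum_mul]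
  refine Finset.sum_congr rfl fun k _ => ?_
  rw [hpow, Matrix.mul_smul, Matrix.smul_mul]

end UpperToeplitz

/-- If `ϱ` is a unital algebra homomorphism from the algebra `UpperToepl_n` of upper
triangular Toeplitz matrices into `M_n(ℂ)` such that `‖ϱ(X)‖ = ‖X‖` for every
`X ∈ UpperToepl_n`, then `ϱ` is implemented by a unitary: `ϱ(X) = U* X U`. -/
theorem toeplitz_isometric_homomorphism_is_unitary_conjugation
    (n : ℕ) (hn : 1 ≤ n)
    (ϱ : Matrix (Fin n) (Fin n) ℂ → Matrix (Fin n) (Fin n) ℂ)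
    (hone : ϱ 1 = 1)
    (hadd : ∀ X Y : Matrix (Fin n) (Fin n) ℂ, IsUpperToeplitz X → IsUpperToeplitz Y →
      ϱ (X + Y) = ϱ X + ϱ Y)
    (hmul : ∀ X Y : Matrix (Fin n) (Fin n) ℂ, IsUpperToeplitz X → IsUpperToeplitz Y →
      ϱ (X * Y) = ϱ X * ϱ Y)
    (hsmul : ∀ (c : ℂ) (X : Matrix (Fin n) (Fin n) ℂ), IsUpperToeplitz X →
      ϱ (c • X) = c • ϱ X)
    (hnorm : ∀ X : Matrix (Fin n) (Fin n) ℂ, IsUpperToeplitz X → opNorm (ϱ X) = opNorm X) :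
    ∃ U : Matrix (Fin n) (Fin n) ℂ, U ∈ Matrix.unitaryGroup (Fin n) ℂ ∧
      ∀ X : Matrix (Fin n) (Fin n) ℂ, IsUpperToeplitz X → ϱ X = star U * X * U := by
  set T := toEuclideanCLM (𝕜 := ℂ) (ϱ (shiftMatrix ℂ n))
  have hpow := map_shiftMatrix_pow hone hmul
  have hnorm_pow (k : ℕ) : ‖T ^ k‖ = ‖toEuclideanCLM (𝕜 := ℂ) (shiftMatrix ℂ n ^ k)‖ := by
    rw [← map_pow, ← hpow]
    exact hnorm _ (isUpperToeplitz_shiftMatrix_pow k)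
  have hT : ‖T‖ ≤ 1 := by
    rw [← pow_one T, hnorm_pow, pow_one]
    exact norm_toEuclideanCLM_shiftMatrix_le
  have hnil : ϱ (shiftMatrix ℂ n) ^ n = 0 := by
    rw [← hpow, shiftMatrix_pow_self, map_zero_of_map_smul hsmul]
  have : Nonempty (Fin n) := ⟨⟨0, hn⟩⟩
  obtain ⟨x, hx, hxT⟩ := (T ^ (n - 1)).exists_norm_eq_one_norm_apply_eq_opNorm
  have hlast : ‖(T ^ (n - 1)) x‖ = 1 := by
    rw [hxT, hnorm_pow, norm_toEuclideanCLM_shiftMatrix_pow (by omega)]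
  have horth := ContinuousLinearMap.orthonormal_pow_apply hT hx hlast
    (by rw [← map_pow, hnil, map_zero]; rfl)
  set V := jordanChainMatrix (ϱ (shiftMatrix ℂ n)) (WithLp.ofLp x)
  have hV : V ∈ unitaryGroup (Fin n) ℂ := by
    simpa [V, jordanChainMatrix, T, ← map_pow] using
      mem_unitaryGroup_of_orthonormal_columns (horth.comp _ Fin.rev_injective)
  have hconj (k : ℕ) : ϱ (shiftMatrix ℂ n ^ k) = V * shiftMatrix ℂ n ^ k * star V := by
    rw [hpow, ((semiconjBy_jordanChainMatrix (by simp [hnil])).pow_right k).eq, mul_assoc,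
      mem_unitaryGroup_iff.1 hV, mul_one]
  refine ⟨star V, Unitary.star_mem hV, fun X hX => ?_⟩
  rw [star_star]
  exact map_eq_mul_mul_of_map_shiftMatrix_pow hadd hsmul hconj hX
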